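/- arXiv:1208.5087 — 3 statements merged into one kernel-verified Lean document; each statement's English description precedes it below -/
import Mathlib

section
/- The full generator applied to the exponential of minus half the mean fitness (Appendix D): Fix K ≥ 2, θ ∈ ℝ^K with all θ_i > 0, and a symmetric matrix σ ∈ ℝ^{K×K} with σ_{K,K} = 0. Then for every x in the interior of the simplex Δ_{K-1}, L e^{−σ̄(x)/2} = −e^{−σ̄(x)/2} Q(x;σ,θ); equivalently, (1/2)[Σ_{i=1}^K x_i σ_i(x)² + Σ_{i=1}^K x_i σ_{i,i} − (1+|θ|)σ̄(x) − σ̄(x)² + Σ_{i=1}^K θ_i σ_i(x)] · e^{−σ̄(x)/2} = −L e^{−σ̄(x)/2}. -/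
open MeasureTheory Filter

noncomputable section WrightFisher

/-- The modified Jacobi polynomial `R_n^{(a,b)}`. -/
def modJacobi (a b : ℝ) (n : ℕ) (x : ℝ) : ℝ :=
  ∑ s ∈ Finset.range (n + 1),
    (Real.Gamma ((n : ℝ) + b) / (Real.Gamma ((n : ℝ) - (s : ℝ) + 1) * Real.Gamma (b + (s : ℝ)))) *
      (Real.Gamma ((n : ℝ) + a) / (Real.Gamma ((s : ℝ) + 1) * Real.Gamma (a + (n : ℝ) - (s : ℝ)))) *
      (x - 1) ^ s * x ^ (n - s)

/-- The norming constant `c_n^{(a,b)}`. -/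
def cConst (a b : ℝ) (n : ℕ) : ℝ :=
  Real.Gamma ((n : ℝ) + a) * Real.Gamma ((n : ℝ) + b) /
    ((2 * (n : ℝ) + a + b - 1) * Real.Gamma ((n : ℝ) + a + b - 1) * Real.Gamma ((n : ℝ) + 1))

/-- Inclusion of `Fin (K-1)` into `Fin K`. -/
def idx (K : ℕ) (j : Fin (K - 1)) : Fin K := Fin.castLE (Nat.sub_le K 1) j

/-- `N_j = Σ_{i>j} n_i`. -/
def Nsum (K : ℕ) (n : Fin (K - 1) → ℕ) (j : Fin (K - 1)) : ℕ :=
  ∑ i ∈ Finset.univ.filter (fun i => j < i), n i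

/-- `Θ_j = Σ_{i=j+1}^{K} θ_i` (0-indexed: sum of `θ i` for `i > j`). -/
def Tsum (K : ℕ) (θ : Fin K → ℝ) (j : Fin (K - 1)) : ℝ :=
  ∑ i ∈ Finset.univ.filter (fun i : Fin K => (j : ℕ) < (i : ℕ)), θ i

/-- `Σ_{i<j} x_i`. -/
def partialSum (K : ℕ) (x : Fin (K - 1) → ℝ) (j : Fin (K - 1)) : ℝ :=
  ∑ i ∈ Finset.univ.filter (fun i => i < j), x i

/-- The multivariate Jacobi polynomial `P_n^θ`. -/
def JacobiP (K : ℕ) (θ : Fin K → ℝ) (n : Fin (K - 1) → ℕ) (x : Fin (K - 1) → ℝ) : ℝ :=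
  ∏ j : Fin (K - 1),
    (1 - x j / (1 - partialSum K x j)) ^ (Nsum K n j) *
      modJacobi (θ (idx K j)) (Tsum K θ j + 2 * (Nsum K n j : ℝ)) (n j)
        (x j / (1 - partialSum K x j))

/-- Extend `x ∈ ℝ^{K-1}` to all `K` allele frequencies, `x_K := 1 - Σ x_i`. -/
def extendFreq (K : ℕ) (x : Fin (K - 1) → ℝ) (i : Fin K) : ℝ :=
  if h : (i : ℕ) < K - 1 then x ⟨i, h⟩ else 1 - ∑ j, x j

/-- The unnormalized Dirichlet density `Π_0`. -/
def Pi0 (K : ℕ) (θ : Fin K → ℝ) (x : Fin (K - 1) → ℝ) : ℝ :=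
  ∏ i : Fin K, extendFreq K x i ^ (θ i - 1)

/-- The norming constant `C_n^θ`. -/
def CConst (K : ℕ) (θ : Fin K → ℝ) (n : Fin (K - 1) → ℕ) : ℝ :=
  ∏ j : Fin (K - 1), cConst (θ (idx K j)) (Tsum K θ j + 2 * (Nsum K n j : ℝ)) (n j)

/-- Interior of the simplex `Δ_{K-1}`. -/
def simplexInt (K : ℕ) : Set (Fin (K - 1) → ℝ) :=
  {x | (∀ i, 0 < x i) ∧ ∑ i, x i < 1}

/-- Open unit cube `(0,1)^{K-1}`. -/
def openCube (K : ℕ) : Set (Fin (K - 1) → ℝ) :=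
  {ξ | ∀ i, ξ i ∈ Set.Ioo (0 : ℝ) 1}

/-- The stick-breaking map `T(ξ)_i = ξ_i Π_{j<i}(1-ξ_j)`. -/
def stickBreak (K : ℕ) (ξ : Fin (K - 1) → ℝ) : Fin (K - 1) → ℝ :=
  fun i => ξ i * ∏ j ∈ Finset.univ.filter (fun j => j < i), (1 - ξ j)

/-- Inverse of the stick-breaking map, `S(x)_i = x_i / (1 - Σ_{j<i} x_j)`. -/
def stickBreakInv (K : ℕ) (x : Fin (K - 1) → ℝ) : Fin (K - 1) → ℝ :=
  fun i => x i / (1 - partialSum K x i)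

/-- Partial derivative `∂f/∂x_i`. -/
def pd (K : ℕ) (f : (Fin (K - 1) → ℝ) → ℝ) (i : Fin (K - 1)) (x : Fin (K - 1) → ℝ) : ℝ :=
  fderiv ℝ f x (Pi.single i 1)

/-- `|θ| = Σ θ_i`. -/
def thetaTot (K : ℕ) (θ : Fin K → ℝ) : ℝ := ∑ i, θ i

/-- The neutral Wright-Fisher generator `L_0`. -/
def L0 (K : ℕ) (θ : Fin K → ℝ) (f : (Fin (K - 1) → ℝ) → ℝ) (x : Fin (K - 1) → ℝ) : ℝ :=
  (1 / 2) * ∑ i, ∑ j, x i * ((if i = j then (1 : ℝ) else 0) - x j) * pd K (pd K f j) i x +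
    (1 / 2) * ∑ i, (θ (idx K i) - thetaTot K θ * x i) * pd K f i x

/-- Marginal fitness `σ_i(x)`. -/
def margFit (K : ℕ) (σ : Fin K → Fin K → ℝ) (x : Fin (K - 1) → ℝ) (i : Fin K) : ℝ :=
  ∑ j, σ i j * extendFreq K x j

/-- Mean fitness `σ̄(x)`. -/
def meanFit (K : ℕ) (σ : Fin K → Fin K → ℝ) (x : Fin (K - 1) → ℝ) : ℝ :=
  ∑ i, ∑ j, σ i j * extendFreq K x i * extendFreq K x j

/-- The selection part `L_σ` of the generator. -/
def Lsel (K : ℕ) (σ : Fin K → Fin K → ℝ) (f : (Fin (K - 1) → ℝ) → ℝ)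
    (x : Fin (K - 1) → ℝ) : ℝ :=
  ∑ i, x i * (margFit K σ x (idx K i) - meanFit K σ x) * pd K f i x

/-- The full generator `L = L_0 + L_σ`. -/
def Lfull (K : ℕ) (θ : Fin K → ℝ) (σ : Fin K → Fin K → ℝ) (f : (Fin (K - 1) → ℝ) → ℝ)
    (x : Fin (K - 1) → ℝ) : ℝ :=
  L0 K θ f x + Lsel K σ f x

/-- The polynomial `Q(x; σ, θ)`. -/
def Qpoly (K : ℕ) (θ : Fin K → ℝ) (σ : Fin K → Fin K → ℝ) (x : Fin (K - 1) → ℝ) : ℝ :=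
  (1 / 2) * (∑ i, extendFreq K x i * margFit K σ x i ^ 2
    + ∑ i, θ i * margFit K σ x i
    + ∑ i, extendFreq K x i * σ i i
    - (1 + thetaTot K θ) * meanFit K σ x
    - meanFit K σ x ^ 2)

/-- Neutral eigenvalue `λ^θ_{|n|} = |n|(|n|-1+|θ|)/2`. -/
def lamNeutral (K : ℕ) (θ : Fin K → ℝ) (n : Fin (K - 1) → ℕ) : ℝ :=
  (1 / 2) * (∑ j, (n j : ℝ)) * ((∑ j, (n j : ℝ)) - 1 + thetaTot K θ)

/-- Recurrence constants `G^{(a,b)}_{n,m}`. -/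
def Gc (a b : ℝ) (n m : ℕ) : ℝ :=
  if n = m + 1 then
    ((n : ℝ) + a - 1) * ((n : ℝ) + b - 1) /
      ((2 * (n : ℝ) + a + b - 1) * (2 * (n : ℝ) + a + b - 2))
  else if n = m then
    (if n = 0 then a / (a + b)
     else 1 / 2 - (b - a) * (a + b - 2) / (2 * (2 * (n : ℝ) + a + b) * (2 * (n : ℝ) + a + b - 2)))
  else if m = n + 1 then
    ((n : ℝ) + 1) * ((n : ℝ) + a + b - 1) / ((2 * (n : ℝ) + a + b) * (2 * (n : ℝ) + a + b - 1))
  else 0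

/-- Recurrence constants `H^{(a,b)}_{n,m}`. -/
def Hc (a b : ℝ) (n m : ℕ) : ℝ :=
  if m = n then
    ((n : ℝ) + a + b - 1) * ((n : ℝ) + a + b) /
      ((2 * (n : ℝ) + a + b - 1) * (2 * (n : ℝ) + a + b))
  else if n = m + 1 then
    (if n = 1 then -2 * a / (a + b + 2)
     else if 1 < n then
       -2 * ((n : ℝ) + a - 1) * ((n : ℝ) + a + b - 1) /
         ((2 * (n : ℝ) + a + b - 2) * (2 * (n : ℝ) + a + b))
     else 0)
  else if n = m + 2 then
    (if 1 < n then
       ((n : ℝ) + a - 2) * ((n : ℝ) + a - 1) /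
         ((2 * (n : ℝ) + a + b - 2) * (2 * (n : ℝ) + a + b - 1))
     else 0)
  else 0

/-- Recurrence constants `I^{(a,b)}_{n,m}`. -/
def Ic (a b : ℝ) (n m : ℕ) : ℝ :=
  if m = n + 1 then
    (if n = 0 then -1 / (a + b)
     else -(((n : ℝ) + 1) * ((n : ℝ) + a + b - 1)) /
       ((2 * (n : ℝ) + a + b - 1) * (2 * (n : ℝ) + a + b)))
  else if m = n then
    (if n = 0 then b / (a + b)
     else if n = 1 then (b ^ 2 + a * (b + 2)) / ((a + b) * (a + b + 2))
     else (b ^ 2 + 2 * (n : ℝ) * ((n : ℝ) + a - 1) + b * (2 * (n : ℝ) + a - 2)) /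
       ((2 * (n : ℝ) + a + b - 2) * (2 * (n : ℝ) + a + b)))
  else if n = m + 1 then
    (if n = 1 then -(a * b) / ((a + b) * (a + b + 1))
     else -(((n : ℝ) + a - 1) * ((n : ℝ) + b - 1)) /
       ((2 * (n : ℝ) + a + b - 2) * (2 * (n : ℝ) + a + b - 1)))
  else 0

/-- Recurrence constants `J^{(a,b)}_{n,m}`. -/
def Jc (a b : ℝ) (n m : ℕ) : ℝ :=
  if m = n then
    (if n = 0 then (b - 1) * (b - 2) / ((a + b - 1) * (a + b - 2))
     else ((n : ℝ) + b - 2) * ((n : ℝ) + b - 1) /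
       ((2 * (n : ℝ) + a + b - 2) * (2 * (n : ℝ) + a + b - 1)))
  else if m = n + 1 then
    -2 * ((n : ℝ) + 1) * ((n : ℝ) + b - 1) / ((2 * (n : ℝ) + a + b - 2) * (2 * (n : ℝ) + a + b))
  else if m = n + 2 then
    ((n : ℝ) + 1) * ((n : ℝ) + 2) / ((2 * (n : ℝ) + a + b - 1) * (2 * (n : ℝ) + a + b))
  else 0

/-- The index set `M_i(n)`. -/
def indexSet (K : ℕ) (i : Fin (K - 1)) (n : Fin (K - 1) → ℕ) : Set (Fin (K - 1) → ℕ) :=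
  {m | (∀ j, i < j → Nsum K m j = Nsum K n j) ∧
       (∀ j, j ≤ i → |(Nsum K m j : ℤ) - (Nsum K n j : ℤ)| ≤ 1)}

/-- The explicit recurrence coefficient `r^{(θ,i)}_{n,m}`. -/
def rCoeff (K : ℕ) (θ : Fin K → ℝ) (i : Fin (K - 1)) (n m : Fin (K - 1) → ℕ) : ℝ :=
  Gc (θ (idx K i)) (Tsum K θ i + 2 * (Nsum K n i : ℝ)) (n i) (m i) *
    ∏ j ∈ Finset.univ.filter (fun j => j < i),
      (if Nsum K m j = Nsum K n j + 1 then
         Hc (θ (idx K j)) (Tsum K θ j + 2 * (Nsum K n j : ℝ)) (n j) (m j)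
       else if Nsum K m j = Nsum K n j then
         Ic (θ (idx K j)) (Tsum K θ j + 2 * (Nsum K n j : ℝ)) (n j) (m j)
       else if Nsum K n j = Nsum K m j + 1 then
         Jc (θ (idx K j)) (Tsum K θ j + 2 * (Nsum K n j : ℝ)) (n j) (m j)
       else 0)

/-- `Θ_{i-1} = Σ_{l=i}^K θ_l` (0-indexed: sum of `θ l` for `l ≥ i`). -/
def ThetaGe (K : ℕ) (θ : Fin K → ℝ) (i : Fin (K - 1)) : ℝ :=
  ∑ l ∈ Finset.univ.filter (fun l : Fin K => (i : ℕ) ≤ (l : ℕ)), θ l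

end WrightFisher

/-! Write `X = (x_1, …, x_K)` for the extended frequencies, so that `Σ_k X_k = 1`. The
partial derivative `∂_i` moves `X` along `δ_{·i} - δ_{·K}`; hence `∂_i e^{-σ̄/2}` and
`∂_i ∂_j e^{-σ̄/2}` are `e^{-σ̄/2}` times the pairings of `-σ_k(x)` and
`σ_k(x) σ_l(x) - σ_{kl}` with these tangent vectors. The coefficients of `L` (the diffusion
matrix `x_i (δ_{ij} - x_j)`, the mutation drift `θ_i - |θ| x_i` and the selection drift
`x_i (σ_i(x) - σ̄(x))`) are the first `K - 1` coordinates of vectors on `K` indices with zero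
sum, and pairing such a restriction with the tangent vectors gives back the full vector. So
`L e^{-σ̄/2} / e^{-σ̄/2}` is the same expression written symmetrically in all `K` coordinates,
where it collapses to `-Q` using only `Σ_k X_k = 1`, `Σ_k X_k σ_k(x) = σ̄(x)` and the symmetry
of `σ`. -/

open Finset

section Coordinates

variable {K : ℕ}

theorem idx_injective : Function.Injective (idx K) := Fin.castLE_injective (Nat.sub_le K 1)

theorem extendFreq_idx (x : Fin (K - 1) → ℝ) (i : Fin (K - 1)) :
    extendFreq K x (idx K i) = x i := by
  simp [extendFreq, idx]

theorem sum_extendFreq_eq_one (hK : 0 < K) (x : Fin (K - 1) → ℝ) :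
    ∑ k, extendFreq K x k = 1 := by
  obtain ⟨n, rfl⟩ : ∃ n, K = n + 1 := ⟨K - 1, by omega⟩
  rw [Fin.sum_univ_castSucc]
  simp [extendFreq]

-- `∂ x_k / ∂ x_i` for the extended coordinates; the `else` branch is `k = K`,
-- where `x_K = 1 - Σ x_j`.
def dExtendFreq (K : ℕ) (i : Fin (K - 1)) (k : Fin K) : ℝ :=
  if h : (k : ℕ) < K - 1 then (Pi.single i 1 : Fin (K - 1) → ℝ) ⟨k, h⟩ else -1

theorem sum_mul_dExtendFreq {u : Fin K → ℝ} (hu : ∑ k, u k = 0) (k : Fin K) :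
    ∑ i, u (idx K i) * dExtendFreq K i k = u k := by
  unfold dExtendFreq
  split_ifs with h
  · simp only [Pi.single_apply, mul_ite, mul_one, mul_zero, sum_ite_eq]
    simp [idx]
  · obtain ⟨n, rfl⟩ : ∃ n, K = n + 1 := ⟨K - 1, by omega⟩
    obtain rfl : k = Fin.last n := Fin.ext (by simp; omega)
    rw [Fin.sum_univ_castSucc] at hu
    simp only [mul_neg_one, sum_neg_distrib]
    change -∑ i : Fin n, u i.castSucc = _
    linarith

theorem sum_mul_sum_dExtendFreq {w : Fin (K - 1) → ℝ} {u : Fin K → ℝ}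
    (hw : ∀ i, w i = u (idx K i)) (hu : ∑ k, u k = 0) (B : Fin K → ℝ) :
    ∑ i, w i * ∑ k, dExtendFreq K i k * B k = ∑ k, u k * B k := by
  simp only [mul_sum, hw]
  rw [sum_comm]
  refine sum_congr rfl fun k _ => ?_
  rw [← sum_mul_dExtendFreq hu k, sum_mul]
  exact sum_congr rfl fun _ _ => by ring

@[fun_prop]
theorem differentiable_extendFreq (k : Fin K) :
    Differentiable ℝ (fun y : Fin (K - 1) → ℝ => extendFreq K y k) := by
  unfold extendFreq
  split_ifs <;> fun_prop

theorem pd_extendFreq (i : Fin (K - 1)) (k : Fin K) (x : Fin (K - 1) → ℝ) :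
    pd K (fun y => extendFreq K y k) i x = dExtendFreq K i k := by
  unfold pd extendFreq dExtendFreq
  by_cases h : (k : ℕ) < K - 1
  · simp only [h, dite_true, (hasFDerivAt_apply _ x).fderiv, ContinuousLinearMap.proj_apply]
  · simp only [h, dite_false]
    rw [((hasFDerivAt_const (1 : ℝ) x).fun_sub
      (HasFDerivAt.fun_sum fun j _ => hasFDerivAt_apply j x)).fderiv]
    simp

end Coordinates

section PartialDerivative

variable {K : ℕ} {f g : (Fin (K - 1) → ℝ) → ℝ} {i : Fin (K - 1)} {x : Fin (K - 1) → ℝ}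

theorem pd_const (c : ℝ) : pd K (fun _ => c) i x = 0 := by
  simp [pd]

theorem pd_neg : pd K (fun y => -f y) i x = -pd K f i x := by
  simp [pd, fderiv_fun_neg]

theorem pd_mul (hf : DifferentiableAt ℝ f x) (hg : DifferentiableAt ℝ g x) :
    pd K (fun y => f y * g y) i x = pd K f i x * g x + f x * pd K g i x := by
  simp [pd, fderiv_fun_mul hf hg]
  ring

theorem pd_sum {ι : Type*} (s : Finset ι) {F : ι → (Fin (K - 1) → ℝ) → ℝ}
    (hF : ∀ j, DifferentiableAt ℝ (F j) x) :
    pd K (fun y => ∑ j ∈ s, F j y) i x = ∑ j ∈ s, pd K (F j) i x := by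
  simp [pd, fderiv_fun_sum fun j _ => hF j]

theorem pd_exp (hf : DifferentiableAt ℝ f x) :
    pd K (fun y => Real.exp (f y)) i x = Real.exp (f x) * pd K f i x := by
  simp [pd, fderiv_exp hf]

end PartialDerivative

section Fitness

variable {K : ℕ} (σ : Fin K → Fin K → ℝ)

@[fun_prop]
theorem differentiable_margFit (k : Fin K) :
    Differentiable ℝ (fun y => margFit K σ y k) := by
  unfold margFit; fun_prop

@[fun_prop]
theorem differentiable_meanFit : Differentiable ℝ (meanFit K σ) := by
  unfold meanFit; fun_prop

theorem sum_extendFreq_mul_margFit (x : Fin (K - 1) → ℝ) :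
    ∑ k, extendFreq K x k * margFit K σ x k = meanFit K σ x := by
  simp only [margFit, meanFit, mul_sum]
  exact sum_congr rfl fun _ _ => sum_congr rfl fun _ _ => by ring

variable {σ} {i : Fin (K - 1)} {x : Fin (K - 1) → ℝ}

theorem pd_margFit (k : Fin K) :
    pd K (fun y => margFit K σ y k) i x = ∑ l, σ k l * dExtendFreq K i l := by
  simp (disch := fun_prop) only [margFit, pd_sum, pd_mul, pd_const, pd_extendFreq, zero_mul,
    zero_add]

theorem pd_meanFit (hσ : ∀ k l, σ k l = σ l k) :
    pd K (meanFit K σ) i x = 2 * ∑ k, dExtendFreq K i k * margFit K σ x k := by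
  have hrow : ∀ k, ∑ l, σ k l * dExtendFreq K i k * extendFreq K x l =
      dExtendFreq K i k * margFit K σ x k := fun k => by
    rw [margFit, mul_sum]
    exact sum_congr rfl fun _ _ => by ring
  have hcol : ∀ l, ∑ k, σ k l * extendFreq K x k * dExtendFreq K i l =
      dExtendFreq K i l * margFit K σ x l := fun l => by
    rw [margFit, mul_sum]
    exact sum_congr rfl fun k _ => by rw [hσ]; ring
  change pd K (fun y => ∑ k, ∑ l, σ k l * extendFreq K y k * extendFreq K y l) i x = _
  simp (disch := fun_prop) only [pd_sum, pd_mul, pd_const, pd_extendFreq, zero_mul, zero_add,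
    sum_add_distrib]
  rw [sum_comm (f := fun k l => σ k l * extendFreq K x k * dExtendFreq K i l)]
  simp only [hrow, hcol]
  ring

theorem pd_exp_neg_meanFit_div_two (hσ : ∀ k l, σ k l = σ l k) :
    pd K (fun y => Real.exp (-meanFit K σ y / 2)) i x =
      -(Real.exp (-meanFit K σ x / 2) * ∑ k, dExtendFreq K i k * margFit K σ x k) := by
  simp (disch := fun_prop) only [pd_exp, div_eq_mul_inv, pd_mul, pd_neg, pd_const, pd_meanFit hσ]
  ring

theorem pd_pd_exp_neg_meanFit_div_two (hσ : ∀ k l, σ k l = σ l k) (j : Fin (K - 1)) :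
    pd K (pd K (fun y => Real.exp (-meanFit K σ y / 2)) j) i x =
      Real.exp (-meanFit K σ x / 2) * ∑ k, dExtendFreq K j k *
        ∑ l, dExtendFreq K i l * (margFit K σ x k * margFit K σ x l - σ k l) := by
  have hj : pd K (fun y => Real.exp (-meanFit K σ y / 2)) j = fun y =>
      -(Real.exp (-meanFit K σ y / 2) * ∑ k, dExtendFreq K j k * margFit K σ y k) :=
    funext fun y => pd_exp_neg_meanFit_div_two hσ
  have hinner : ∀ k, ∑ l, dExtendFreq K i l * (margFit K σ x k * margFit K σ x l - σ k l) =
      margFit K σ x k * ∑ l, dExtendFreq K i l * margFit K σ x l -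
        ∑ l, σ k l * dExtendFreq K i l := fun k => by
    simp only [mul_sub, sum_sub_distrib, mul_sum]
    congr 1 <;> exact sum_congr rfl fun _ _ => by ring
  rw [hj]
  simp (disch := fun_prop) only [pd_neg, pd_mul, pd_sum, pd_const, pd_margFit,
    pd_exp_neg_meanFit_div_two hσ, zero_mul, zero_add]
  simp only [hinner]
  simp only [mul_sub, sum_sub_distrib, ← mul_assoc, ← sum_mul]
  ring

end Fitness

section Diffusion

def diffusionCoeff {ι : Type*} [DecidableEq ι] (X : ι → ℝ) (k l : ι) : ℝ :=
  X k * ((if k = l then 1 else 0) - X l)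

variable {ι : Type*} [Fintype ι] [DecidableEq ι] {X : ι → ℝ}

theorem sum_diffusionCoeff_right (hX : ∑ k, X k = 1) (k : ι) :
    ∑ l, diffusionCoeff X k l = 0 := by
  simp [diffusionCoeff, ← mul_sum, sum_sub_distrib, hX]

theorem sum_diffusionCoeff_left (hX : ∑ k, X k = 1) (l : ι) :
    ∑ k, diffusionCoeff X k l = 0 := by
  simp [diffusionCoeff, mul_sub, sum_sub_distrib, ← sum_mul, hX]

theorem sum_sum_diffusionCoeff_mul (X : ι → ℝ) (A : ι → ι → ℝ) :
    ∑ k, ∑ l, diffusionCoeff X k l * A k l =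
      ∑ k, X k * A k k - ∑ k, ∑ l, X k * X l * A k l := by
  simp [diffusionCoeff, mul_sub, sub_mul, sum_sub_distrib, mul_assoc]

end Diffusion

section Generator

variable {K : ℕ} {σ : Fin K → Fin K → ℝ} {x : Fin (K - 1) → ℝ}

theorem sum_mul_pd_exp_neg_meanFit_div_two (hσ : ∀ k l, σ k l = σ l k)
    {w : Fin (K - 1) → ℝ} {u : Fin K → ℝ} (hw : ∀ i, w i = u (idx K i))
    (hu : ∑ k, u k = 0) :
    ∑ i, w i * pd K (fun y => Real.exp (-meanFit K σ y / 2)) i x =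
      -(Real.exp (-meanFit K σ x / 2) * ∑ k, u k * margFit K σ x k) := by
  simp only [pd_exp_neg_meanFit_div_two hσ, mul_neg, sum_neg_distrib, mul_left_comm (w _),
    ← mul_sum, sum_mul_sum_dExtendFreq hw hu]

theorem sum_sum_mul_pd_pd_exp_neg_meanFit_div_two (hK : 0 < K) (hσ : ∀ k l, σ k l = σ l k) :
    ∑ i, ∑ j, x i * ((if i = j then (1 : ℝ) else 0) - x j) *
        pd K (pd K (fun y => Real.exp (-meanFit K σ y / 2)) j) i x =
      Real.exp (-meanFit K σ x / 2) *
        (∑ k, extendFreq K x k * margFit K σ x k ^ 2 - ∑ k, extendFreq K x k * σ k k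
          - meanFit K σ x ^ 2 + meanFit K σ x) := by
  set X := extendFreq K x
  have hX : ∑ k, X k = 1 := sum_extendFreq_eq_one hK x
  have hrow : ∀ i j, x i * ((if i = j then (1 : ℝ) else 0) - x j) =
      diffusionCoeff X (idx K i) (idx K j) := fun i j => by
    simp only [diffusionCoeff, X, extendFreq_idx, idx_injective.eq_iff]
  simp only [pd_pd_exp_neg_meanFit_div_two hσ, mul_left_comm _ (Real.exp _), ← mul_sum]
  congr 1
  simp only [sum_mul_sum_dExtendFreq (hrow _) (sum_diffusionCoeff_right hX _)]
  rw [sum_comm]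
  simp only [sum_mul_sum_dExtendFreq (fun _ => rfl) (sum_diffusionCoeff_left hX _)]
  rw [sum_comm, sum_sum_diffusionCoeff_mul]
  have hsq : ∑ k, ∑ l, X k * X l * (margFit K σ x l * margFit K σ x k) =
      meanFit K σ x ^ 2 := by
    rw [← sum_extendFreq_mul_margFit, sq, sum_mul_sum]
    exact sum_congr rfl fun _ _ => sum_congr rfl fun _ _ => by ring
  have hmean : ∑ k, ∑ l, X k * X l * σ l k = meanFit K σ x := by
    rw [meanFit, sum_comm]
    exact sum_congr rfl fun _ _ => sum_congr rfl fun _ _ => by ring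
  simp only [mul_sub, sum_sub_distrib, hsq, hmean, ← sq]
  ring

theorem sum_drift_mul_pd_exp_neg_meanFit_div_two (hK : 0 < K) (hσ : ∀ k l, σ k l = σ l k)
    (θ : Fin K → ℝ) :
    ∑ i, (θ (idx K i) - thetaTot K θ * x i) *
        pd K (fun y => Real.exp (-meanFit K σ y / 2)) i x =
      -(Real.exp (-meanFit K σ x / 2) *
        (∑ k, θ k * margFit K σ x k - thetaTot K θ * meanFit K σ x)) := by
  rw [sum_mul_pd_exp_neg_meanFit_div_two hσ (u := fun k => θ k - thetaTot K θ * extendFreq K x k)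
    (fun i => by rw [extendFreq_idx])
    (by rw [sum_sub_distrib, ← mul_sum, sum_extendFreq_eq_one hK, mul_one, thetaTot, sub_self])]
  simp only [sub_mul, sum_sub_distrib, mul_assoc, ← mul_sum, sum_extendFreq_mul_margFit]

theorem sum_selection_mul_pd_exp_neg_meanFit_div_two (hK : 0 < K) (hσ : ∀ k l, σ k l = σ l k) :
    ∑ i, x i * (margFit K σ x (idx K i) - meanFit K σ x) *
        pd K (fun y => Real.exp (-meanFit K σ y / 2)) i x =
      -(Real.exp (-meanFit K σ x / 2) *
        (∑ k, extendFreq K x k * margFit K σ x k ^ 2 - meanFit K σ x ^ 2)) := by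
  rw [sum_mul_pd_exp_neg_meanFit_div_two hσ
    (u := fun k => extendFreq K x k * (margFit K σ x k - meanFit K σ x))
    (fun i => by rw [extendFreq_idx])
    (by simp only [mul_sub, sum_sub_distrib, sum_extendFreq_mul_margFit, ← sum_mul,
      sum_extendFreq_eq_one hK, one_mul, sub_self])]
  congr 2
  calc ∑ k, extendFreq K x k * (margFit K σ x k - meanFit K σ x) * margFit K σ x k
      = ∑ k, extendFreq K x k * margFit K σ x k ^ 2 -
          meanFit K σ x * ∑ k, extendFreq K x k * margFit K σ x k := by
        rw [mul_sum, ← sum_sub_distrib]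
        exact sum_congr rfl fun _ _ => by ring
    _ = _ := by rw [sum_extendFreq_mul_margFit, sq]

end Generator

/-- Appendix D: `L e^{-σ̄/2} = -e^{-σ̄/2} Q(·;σ,θ)` on the interior of the
simplex. -/
theorem generator_on_exp_meanFit (K : ℕ) (hK : 2 ≤ K) (θ : Fin K → ℝ)
    (σ : Fin K → Fin K → ℝ) (hσ : ∀ i j, σ i j = σ j i)
    (x : Fin (K - 1) → ℝ) :
    Lfull K θ σ (fun y => Real.exp (-meanFit K σ y / 2)) x =
      -Real.exp (-meanFit K σ x / 2) * Qpoly K θ σ x := by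
  rw [Lfull, L0, Lsel, sum_sum_mul_pd_pd_exp_neg_meanFit_div_two (by omega) hσ,
    sum_drift_mul_pd_exp_neg_meanFit_div_two (by omega) hσ,
    sum_selection_mul_pd_exp_neg_meanFit_div_two (by omega) hσ, Qpoly]
  ring
end

section
/- Diagonalization of the neutral generator under the stick-breaking change of coordinates (Appendix B Lemma): Fix K ≥ 2 and θ ∈ ℝ^K with all θ_i > 0. Define T : (0,1)^{K-1} → ℝ^{K-1} by T(ξ)_i := ξ_i Π_{j<i}(1 − ξ_j). Let f be twice continuously differentiable on the interior of Δ_{K-1} and set f̃ := f ∘ T. Then for every ξ ∈ (0,1)^{K-1}: (L_0 f)(T(ξ)) = (1/2) Σ_{i=1}^{K-1} [ξ_i(1 − ξ_i) / Π_{k<i}(1 − ξ_k)] · ∂²f̃/∂ξ_i²(ξ) + (1/2) Σ_{i=1}^{K-1} [(θ_i − Θ_{i-1} ξ_i) / Π_{k<i}(1 − ξ_k)] · ∂f̃/∂ξ_i(ξ), where Θ_{i-1} := Σ_{l=i}^K θ_l. In particular, no mixed second-order partial derivatives appear in the transformed generator. -/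
open MeasureTheory Filter

/-!
The stick-breaking map `T` is affine in each coordinate `ξ_i` separately, and its slope
`∂T/∂ξ_i` does not depend on `ξ_i`. Along the `i`-th coordinate line, `f ∘ T` is therefore `f`
restricted to an affine line, so `∂_i (f ∘ T) = Df(Tξ)(∂_i T)` and
`∂_i² (f ∘ T) = D²f(Tξ)(∂_i T, ∂_i T)`, with no first-order correction term. The theorem then
reduces to two identities between coefficients,
`Σ_i a_i (∂_i T_l)(∂_i T_m) = x_l (δ_lm - x_m)` and `Σ_i b_i ∂_i T_l = θ_l - |θ| x_l`, which
telescope because `ξ_i / ((1 - ξ_i) P_i) = 1 / P_{i+1} - 1 / P_i` for the stick lengths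
`P_i = ∏_{j<i} (1 - ξ_j)`.
-/

open Finset
open scoped Topology

theorem Fin.sum_filter_lt_sub {M : Type*} [AddCommGroup M] {n : ℕ} (F : ℕ → M) (l : Fin n) :
    ∑ i ∈ univ.filter (· < l), (F (i + 1) - F i) = F l - F 0 := by
  rw [filter_gt_eq_Iio, ← Finset.sum_range_sub, ← Nat.Iio_eq_range, ← Fin.map_valEmbedding_Iio,
    sum_map]
  rfl

theorem Finset.sum_eq_sum_filter_lt_add {ι M : Type*} [Fintype ι] [LinearOrder ι]
    [AddCommMonoid M] {g : ι → M} (l : ι) (hg : ∀ i, l < i → g i = 0) :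
    ∑ i, g i = ∑ i ∈ univ.filter (· < l), g i + g l := by
  rw [← sum_subset (subset_univ (insert l (univ.filter (· < l)))), sum_insert (by simp), add_comm]
  intro i _ hi
  simp only [mem_insert, mem_filter, mem_univ, true_and, not_or, not_lt] at hi
  exact hg i (lt_of_le_of_ne hi.2 (Ne.symm hi.1))

theorem ContinuousLinearMap.apply_eq_sum_mul_single {ι : Type*} [Fintype ι] [DecidableEq ι]
    (L : (ι → ℝ) →L[ℝ] ℝ) (v : ι → ℝ) : L v = ∑ l, v l * L (Pi.single l 1) := by
  conv_lhs => rw [pi_eq_sum_univ' v]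
  simp [map_sum]

theorem ContinuousLinearMap.apply_apply_eq_sum_mul_single {ι : Type*} [Fintype ι] [DecidableEq ι]
    (B : (ι → ℝ) →L[ℝ] (ι → ℝ) →L[ℝ] ℝ) (w v : ι → ℝ) :
    B w v = ∑ l, ∑ m, w l * v m * B (Pi.single l 1) (Pi.single m 1) := by
  conv_lhs => rw [pi_eq_sum_univ' w, pi_eq_sum_univ' v]
  simp only [map_sum, map_smul, FunLike.coe_sum, Finset.sum_apply, FunLike.coe_smul,
    Pi.smul_apply, smul_eq_mul, mul_sum]
  rw [sum_comm]
  exact sum_congr rfl fun l _ => sum_congr rfl fun m _ => by ring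

theorem ContDiffAt.differentiableAt_fderiv {𝕜 E F : Type*} [NontriviallyNormedField 𝕜]
    [NormedAddCommGroup E] [NormedSpace 𝕜 E] [NormedAddCommGroup F] [NormedSpace 𝕜 F]
    {f : E → F} {x : E} (hf : ContDiffAt 𝕜 2 f x) : DifferentiableAt 𝕜 (fderiv 𝕜 f) x :=
  (hf.fderiv_right (m := 1) le_rfl).differentiableAt one_ne_zero

/-- Length of the stick left after `m` breaks, indexed by `ℕ` so that sums over `i < l`
telescope. -/
noncomputable def stickRest (K : ℕ) (ξ : Fin (K - 1) → ℝ) (m : ℕ) : ℝ :=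
  ∏ j ∈ univ.filter (fun j : Fin (K - 1) => (j : ℕ) < m), (1 - ξ j)

def thetaFrom (K : ℕ) (θ : Fin K → ℝ) (m : ℕ) : ℝ :=
  ∑ l ∈ univ.filter (fun l : Fin K => m ≤ (l : ℕ)), θ l

/-- Column `i` of the Jacobian of the stick-breaking map: `stickBreakCol K ξ i l = ∂T_l/∂ξ_i`. -/
noncomputable def stickBreakCol (K : ℕ) (ξ : Fin (K - 1) → ℝ) (i : Fin (K - 1)) :
    Fin (K - 1) → ℝ :=
  fun l => if l = i then stickRest K ξ l
    else if i < l then -(ξ l * ∏ j ∈ (univ.filter (· < l)).erase i, (1 - ξ j)) else 0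

section StickBreaking

variable {K : ℕ} {ξ : Fin (K - 1) → ℝ}

theorem stickRest_zero : stickRest K ξ 0 = 1 := by simp [stickRest]

theorem stickRest_val (i : Fin (K - 1)) :
    stickRest K ξ i = ∏ j ∈ univ.filter (· < i), (1 - ξ j) := rfl

theorem stickBreak_eq_mul_stickRest (i : Fin (K - 1)) :
    stickBreak K ξ i = ξ i * stickRest K ξ i := rfl

theorem stickRest_succ (i : Fin (K - 1)) :
    stickRest K ξ (i + 1) = (1 - ξ i) * stickRest K ξ i := by
  have : univ.filter (fun j : Fin (K - 1) => (j : ℕ) < i + 1) =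
      insert i (univ.filter (fun j : Fin (K - 1) => (j : ℕ) < i)) := by
    ext j
    simp only [mem_filter, mem_univ, true_and, mem_insert, Fin.ext_iff]
    omega
  rw [stickRest, this, prod_insert (by simp)]
  rfl

theorem stickRest_ne_zero (hξ : ∀ j, ξ j ≠ 1) (m : ℕ) : stickRest K ξ m ≠ 0 :=
  prod_ne_zero_iff.2 fun j _ => sub_ne_zero.2 (hξ j).symm

theorem stickRest_pos (hξ : ∀ j, ξ j < 1) (m : ℕ) : 0 < stickRest K ξ m :=
  prod_pos fun j _ => sub_pos.2 (hξ j)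

theorem sum_stickBreak : ∑ l, stickBreak K ξ l = 1 - stickRest K ξ (K - 1) := by
  have hT : ∀ l, stickBreak K ξ l = -(stickRest K ξ (l + 1) - stickRest K ξ l) := fun l => by
    rw [stickBreak_eq_mul_stickRest, stickRest_succ]
    ring
  simp_rw [hT, sum_neg_distrib]
  rw [Fin.sum_univ_eq_sum_range (fun k => stickRest K ξ (k + 1) - stickRest K ξ k),
    sum_range_sub, stickRest_zero]
  ring

theorem isOpen_simplexInt (K : ℕ) : IsOpen (simplexInt K) := by
  simp only [simplexInt, Set.ofPred_and, Set.ofPred_forall]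
  exact (isOpen_iInter_of_finite fun i => isOpen_lt continuous_const (continuous_apply i)).inter
    (isOpen_lt (by fun_prop) continuous_const)

theorem stickBreak_mem_simplexInt (hξ : ξ ∈ openCube K) : stickBreak K ξ ∈ simplexInt K := by
  have hP := stickRest_pos fun j => (hξ j).2
  refine ⟨fun l => mul_pos (hξ l).1 (hP l), ?_⟩
  rw [sum_stickBreak]
  linarith [hP (K - 1)]

theorem ThetaGe_eq_thetaFrom (θ : Fin K → ℝ) (i : Fin (K - 1)) :
    ThetaGe K θ i = thetaFrom K θ i := rfl

theorem thetaFrom_zero (θ : Fin K → ℝ) : thetaFrom K θ 0 = thetaTot K θ := by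
  simp [thetaFrom, thetaTot]

theorem thetaFrom_eq_add_succ (θ : Fin K → ℝ) (i : Fin (K - 1)) :
    thetaFrom K θ i = θ (idx K i) + thetaFrom K θ (i + 1) := by
  have : univ.filter (fun l : Fin K => (i : ℕ) ≤ l) =
      insert (idx K i) (univ.filter (fun l : Fin K => (i : ℕ) + 1 ≤ l)) := by
    ext l
    simp only [mem_filter, mem_univ, true_and, mem_insert, Fin.ext_iff, idx, Fin.val_castLE]
    omega
  rw [thetaFrom, this, sum_insert (by simp [idx])]
  rfl

theorem stickBreakCol_self (i : Fin (K - 1)) : stickBreakCol K ξ i i = stickRest K ξ i :=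
  if_pos rfl

theorem stickBreakCol_of_lt {i l : Fin (K - 1)} (h : l < i) : stickBreakCol K ξ i l = 0 := by
  rw [stickBreakCol, if_neg h.ne, if_neg h.not_gt]

theorem stickBreakCol_of_gt {i l : Fin (K - 1)} (hξ : ξ i ≠ 1) (h : i < l) :
    stickBreakCol K ξ i l = -(stickBreak K ξ l / (1 - ξ i)) := by
  rw [stickBreakCol, if_neg h.ne', if_pos h, stickBreak,
    ← mul_prod_erase (univ.filter (· < l)) (fun j => 1 - ξ j) (by simpa using h)]
  field_simp [sub_ne_zero.2 hξ.symm]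

theorem prod_one_sub_add_mul_single (ζ : Fin (K - 1) → ℝ) (t : ℝ) {i : Fin (K - 1)}
    {s : Finset (Fin (K - 1))} (hi : i ∉ s) :
    ∏ j ∈ s, (1 - (ζ j + t * Pi.single (M := fun _ => ℝ) i 1 j)) = ∏ j ∈ s, (1 - ζ j) :=
  prod_congr rfl fun j hj => by
    rw [Pi.single_eq_of_ne (ne_of_mem_of_not_mem hj hi), mul_zero, add_zero]

theorem stickBreak_add_smul_single (ζ : Fin (K - 1) → ℝ) (i : Fin (K - 1)) (t : ℝ) :
    stickBreak K (ζ + t • Pi.single i 1) = stickBreak K ζ + t • stickBreakCol K ζ i := by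
  ext l
  simp only [stickBreak, stickBreakCol, Pi.add_apply, Pi.smul_apply, smul_eq_mul]
  rcases lt_trichotomy l i with hli | rfl | hil
  · rw [if_neg hli.ne, if_neg hli.not_gt, Pi.single_eq_of_ne hli.ne,
      prod_one_sub_add_mul_single _ _ (by simpa using hli.not_gt)]
    ring
  · rw [if_pos rfl, prod_one_sub_add_mul_single _ _ (by simp), stickRest_val, Pi.single_eq_same]
    ring
  · have hi : i ∈ univ.filter (· < l) := by simpa using hil
    rw [if_neg hil.ne', if_pos hil, Pi.single_eq_of_ne hil.ne', ← mul_prod_erase _ _ hi,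
      ← mul_prod_erase _ (fun j => 1 - ζ j) hi,
      prod_one_sub_add_mul_single _ _ (notMem_erase i _), Pi.single_eq_same]
    ring

theorem stickBreakCol_add_smul_single (ζ : Fin (K - 1) → ℝ) (i : Fin (K - 1)) (t : ℝ) :
    stickBreakCol K (ζ + t • Pi.single i 1) i = stickBreakCol K ζ i := by
  ext l
  simp only [stickBreakCol, stickRest, Pi.add_apply, Pi.smul_apply, smul_eq_mul]
  split_ifs with hli hil
  · exact prod_one_sub_add_mul_single _ _ (by simp [hli])
  · rw [Pi.single_eq_of_ne hil.ne', mul_zero, add_zero,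
      prod_one_sub_add_mul_single _ _ (notMem_erase i _)]
  · rfl

theorem sum_mul_stickBreakCol_mul_stickBreakCol_of_le (hξ : ∀ j, ξ j ≠ 1) {l m : Fin (K - 1)}
    (hlm : l ≤ m) :
    ∑ i, ξ i * (1 - ξ i) / stickRest K ξ i * (stickBreakCol K ξ i l * stickBreakCol K ξ i m) =
      stickBreak K ξ l * ((if l = m then 1 else 0) - stickBreak K ξ m) := by
  have hP := stickRest_ne_zero hξ
  have hsub : ∀ j, 1 - ξ j ≠ 0 := fun j => sub_ne_zero.2 (hξ j).symm
  have htel : ∑ i ∈ univ.filter (· < l),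
      ξ i * (1 - ξ i) / stickRest K ξ i * (stickBreakCol K ξ i l * stickBreakCol K ξ i m) =
        stickBreak K ξ l * stickBreak K ξ m * ((stickRest K ξ l)⁻¹ - 1) := by
    calc _ = ∑ i ∈ univ.filter (· < l), stickBreak K ξ l * stickBreak K ξ m *
            ((stickRest K ξ (i + 1))⁻¹ - (stickRest K ξ i)⁻¹) := by
          refine sum_congr rfl fun i hi => ?_
          have hil : i < l := (mem_filter.1 hi).2
          rw [stickBreakCol_of_gt (hξ i) hil, stickBreakCol_of_gt (hξ i) (hil.trans_le hlm),
            stickRest_succ]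
          field_simp [hP i, hsub i]
          ring
      _ = _ := by
          rw [← mul_sum, Fin.sum_filter_lt_sub (fun k => (stickRest K ξ k)⁻¹) l, stickRest_zero,
            inv_one]
  rw [sum_eq_sum_filter_lt_add l fun i hi => by rw [stickBreakCol_of_lt hi, zero_mul, mul_zero],
    htel, stickBreakCol_self]
  rcases hlm.eq_or_lt with rfl | hlt
  · rw [if_pos rfl, stickBreakCol_self, stickBreak_eq_mul_stickRest]
    field_simp [hP l]
    ring
  · rw [if_neg hlt.ne, stickBreakCol_of_gt (hξ l) hlt, stickBreak_eq_mul_stickRest l]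
    field_simp [hP l, hsub l]
    ring

theorem sum_mul_stickBreakCol_mul_stickBreakCol (hξ : ∀ j, ξ j ≠ 1) (l m : Fin (K - 1)) :
    ∑ i, ξ i * (1 - ξ i) / stickRest K ξ i * (stickBreakCol K ξ i l * stickBreakCol K ξ i m) =
      stickBreak K ξ l * ((if l = m then 1 else 0) - stickBreak K ξ m) := by
  rcases le_total l m with hlm | hml
  · exact sum_mul_stickBreakCol_mul_stickBreakCol_of_le hξ hlm
  · simp_rw [mul_comm (stickBreakCol K ξ _ l)]
    rw [sum_mul_stickBreakCol_mul_stickBreakCol_of_le hξ hml]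
    rcases hml.eq_or_lt with rfl | hlt
    · rfl
    · rw [if_neg hlt.ne, if_neg hlt.ne']
      ring

theorem sum_mul_stickBreakCol (θ : Fin K → ℝ) (hξ : ∀ j, ξ j ≠ 1) (l : Fin (K - 1)) :
    ∑ i, (θ (idx K i) - ThetaGe K θ i * ξ i) / stickRest K ξ i * stickBreakCol K ξ i l =
      θ (idx K l) - thetaTot K θ * stickBreak K ξ l := by
  have hP := stickRest_ne_zero hξ
  have hsub : ∀ j, 1 - ξ j ≠ 0 := fun j => sub_ne_zero.2 (hξ j).symm
  have htel : ∑ i ∈ univ.filter (· < l),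
      (θ (idx K i) - ThetaGe K θ i * ξ i) / stickRest K ξ i * stickBreakCol K ξ i l =
        stickBreak K ξ l * (thetaFrom K θ l / stickRest K ξ l - thetaTot K θ) := by
    calc _ = ∑ i ∈ univ.filter (· < l), stickBreak K ξ l *
            (thetaFrom K θ (i + 1) / stickRest K ξ (i + 1) - thetaFrom K θ i / stickRest K ξ i) := by
          refine sum_congr rfl fun i hi => ?_
          rw [stickBreakCol_of_gt (hξ i) (mem_filter.1 hi).2, stickRest_succ,
            ThetaGe_eq_thetaFrom, thetaFrom_eq_add_succ]
          field_simp [hP i, hsub i]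
          ring
      _ = _ := by
          rw [← mul_sum, Fin.sum_filter_lt_sub (fun k => thetaFrom K θ k / stickRest K ξ k) l,
            stickRest_zero, div_one, thetaFrom_zero]
  rw [sum_eq_sum_filter_lt_add l fun i hi => by rw [stickBreakCol_of_lt hi, mul_zero], htel,
    stickBreakCol_self, stickBreak_eq_mul_stickRest, ThetaGe_eq_thetaFrom]
  field_simp [hP l]
  ring

theorem contDiff_stickBreak {n : WithTop ℕ∞} : ContDiff ℝ n (stickBreak K) :=
  contDiff_pi.2 fun l => (contDiff_apply ℝ ℝ l).mul
    (contDiff_prod fun j _ => contDiff_const.sub (contDiff_apply ℝ ℝ j))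

theorem fderiv_fderiv_apply_eq_sum_pd_pd {f : (Fin (K - 1) → ℝ) → ℝ} {x : Fin (K - 1) → ℝ}
    (hf : DifferentiableAt ℝ (fderiv ℝ f) x) (v w : Fin (K - 1) → ℝ) :
    fderiv ℝ (fun y => fderiv ℝ f y v) x w = ∑ l, ∑ m, w l * v m * pd K (pd K f m) l x := by
  have hflip : ∀ u, fderiv ℝ (fun y => fderiv ℝ f y u) x = (fderiv ℝ (fderiv ℝ f) x).flip u :=
    fun u => by simp [fderiv_clm_apply hf (differentiableAt_const u)]
  have hpd : ∀ l m, pd K (pd K f m) l x =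
      fderiv ℝ (fderiv ℝ f) x (Pi.single l 1) (Pi.single m 1) := fun l m => by
    rw [pd, show pd K f m = fun y => fderiv ℝ f y (Pi.single m 1) from rfl, hflip]
    rfl
  simp only [hpd, hflip, ContinuousLinearMap.flip_apply]
  exact ContinuousLinearMap.apply_apply_eq_sum_mul_single _ w v

theorem pd_comp_stickBreak {f : (Fin (K - 1) → ℝ) → ℝ} {ζ : Fin (K - 1) → ℝ}
    (hf : DifferentiableAt ℝ f (stickBreak K ζ)) (i : Fin (K - 1)) :
    pd K (f ∘ stickBreak K) i ζ = fderiv ℝ f (stickBreak K ζ) (stickBreakCol K ζ i) := by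
  have hfT : DifferentiableAt ℝ (f ∘ stickBreak K) ζ :=
    hf.comp ζ ((contDiff_stickBreak (n := 1)).differentiable one_ne_zero ζ)
  rw [pd, ← hfT.lineDeriv_eq_fderiv, ← hf.lineDeriv_eq_fderiv]
  simp only [lineDeriv, Function.comp_def, stickBreak_add_smul_single]

theorem pd_pd_comp_stickBreak {f : (Fin (K - 1) → ℝ) → ℝ} (hf : ContDiffAt ℝ 2 f (stickBreak K ξ))
    (i : Fin (K - 1)) :
    pd K (pd K (f ∘ stickBreak K) i) i ξ =
      fderiv ℝ (fun y => fderiv ℝ f y (stickBreakCol K ξ i)) (stickBreak K ξ)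
        (stickBreakCol K ξ i) := by
  have hnear : pd K (f ∘ stickBreak K) i =ᶠ[𝓝 ξ]
      fun ζ => fderiv ℝ f (stickBreak K ζ) (stickBreakCol K ζ i) := by
    filter_upwards [(contDiff_stickBreak (n := 0)).continuous.continuousAt.eventually
      (hf.eventually (by simp))] with ζ hζ using pd_comp_stickBreak (hζ.differentiableAt (by simp)) i
  have hpd : DifferentiableAt ℝ (pd K (f ∘ stickBreak K) i) ξ :=
    (hf.comp ξ contDiff_stickBreak.contDiffAt).differentiableAt_fderiv.clm_apply
      (differentiableAt_const _)
  have hf' : DifferentiableAt ℝ (fun y => fderiv ℝ f y (stickBreakCol K ξ i)) (stickBreak K ξ) :=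
    hf.differentiableAt_fderiv.clm_apply (differentiableAt_const _)
  rw [pd, hnear.fderiv_eq, ← (hpd.congr_of_eventuallyEq hnear.symm).lineDeriv_eq_fderiv,
    ← hf'.lineDeriv_eq_fderiv]
  simp only [lineDeriv, stickBreak_add_smul_single, stickBreakCol_add_smul_single]

theorem sum_mul_pd_comp_stickBreak (θ : Fin K → ℝ) (hξ : ∀ j, ξ j ≠ 1)
    {f : (Fin (K - 1) → ℝ) → ℝ} (hf : DifferentiableAt ℝ f (stickBreak K ξ)) :
    ∑ i, (θ (idx K i) - ThetaGe K θ i * ξ i) / stickRest K ξ i * pd K (f ∘ stickBreak K) i ξ =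
      ∑ l, (θ (idx K l) - thetaTot K θ * stickBreak K ξ l) * pd K f l (stickBreak K ξ) := by
  calc _ = fderiv ℝ f (stickBreak K ξ)
        (∑ i, ((θ (idx K i) - ThetaGe K θ i * ξ i) / stickRest K ξ i) • stickBreakCol K ξ i) := by
        simp [pd_comp_stickBreak hf, map_sum]
    _ = _ := by
        rw [ContinuousLinearMap.apply_eq_sum_mul_single]
        simp only [Finset.sum_apply, Pi.smul_apply, smul_eq_mul, sum_mul_stickBreakCol θ hξ]
        rfl

theorem sum_mul_pd_pd_comp_stickBreak (hξ : ∀ j, ξ j ≠ 1) {f : (Fin (K - 1) → ℝ) → ℝ}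
    (hf : ContDiffAt ℝ 2 f (stickBreak K ξ)) :
    ∑ i, ξ i * (1 - ξ i) / stickRest K ξ i * pd K (pd K (f ∘ stickBreak K) i) i ξ =
      ∑ l, ∑ m, stickBreak K ξ l * ((if l = m then 1 else 0) - stickBreak K ξ m) *
        pd K (pd K f m) l (stickBreak K ξ) := by
  simp only [pd_pd_comp_stickBreak hf,
    fderiv_fderiv_apply_eq_sum_pd_pd hf.differentiableAt_fderiv, mul_sum]
  rw [sum_comm]
  refine sum_congr rfl fun l _ => ?_
  rw [sum_comm]
  refine sum_congr rfl fun m _ => ?_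
  rw [← sum_mul_stickBreakCol_mul_stickBreakCol hξ l m, sum_mul]
  exact sum_congr rfl fun i _ => by ring

end StickBreaking

theorem neutral_generator_stick_breaking_general (K : ℕ) (θ : Fin K → ℝ)
    (f : (Fin (K - 1) → ℝ) → ℝ)
    (hf : ContDiffOn ℝ 2 f (simplexInt K))
    (ξ : Fin (K - 1) → ℝ) (hξ : ξ ∈ openCube K) :
    L0 K θ f (stickBreak K ξ) =
      (1 / 2) * ∑ i,
          (ξ i * (1 - ξ i) / ∏ k ∈ Finset.univ.filter (fun k => k < i), (1 - ξ k)) *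
            pd K (pd K (f ∘ stickBreak K) i) i ξ +
        (1 / 2) * ∑ i,
          ((θ (idx K i) - ThetaGe K θ i * ξ i) /
              ∏ k ∈ Finset.univ.filter (fun k => k < i), (1 - ξ k)) *
            pd K (f ∘ stickBreak K) i ξ := by
  have hξ1 : ∀ j, ξ j ≠ 1 := fun j => (hξ j).2.ne
  have hx : ContDiffAt ℝ 2 f (stickBreak K ξ) :=
    hf.contDiffAt ((isOpen_simplexInt K).mem_nhds (stickBreak_mem_simplexInt hξ))
  have hdiffusion := sum_mul_pd_pd_comp_stickBreak hξ1 hx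
  have hdrift := sum_mul_pd_comp_stickBreak θ hξ1 (hx.differentiableAt (by simp))
  simp only [stickRest_val] at hdiffusion hdrift
  rw [hdiffusion, hdrift, L0]

/-- Appendix B Lemma: under the stick-breaking change of coordinates
`T(ξ)_i = ξ_i Π_{j<i}(1-ξ_j)`, the neutral generator `L_0` diagonalizes: for `f` twice
continuously differentiable on the interior of the simplex and `f̃ = f ∘ T`,
`(L_0 f)(T(ξ)) = (1/2) Σ_i [ξ_i(1-ξ_i)/Π_{k<i}(1-ξ_k)] ∂²f̃/∂ξ_i²
 + (1/2) Σ_i [(θ_i - Θ_{i-1} ξ_i)/Π_{k<i}(1-ξ_k)] ∂f̃/∂ξ_i` on `(0,1)^{K-1}`,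
with no mixed second-order partial derivatives. -/
theorem neutral_generator_stick_breaking (K : ℕ) (hK : 2 ≤ K) (θ : Fin K → ℝ)
    (hθ : ∀ i, 0 < θ i) (f : (Fin (K - 1) → ℝ) → ℝ)
    (hf : ContDiffOn ℝ 2 f (simplexInt K))
    (ξ : Fin (K - 1) → ℝ) (hξ : ξ ∈ openCube K) :
    L0 K θ f (stickBreak K ξ) =
      (1 / 2) * ∑ i,
          (ξ i * (1 - ξ i) / ∏ k ∈ Finset.univ.filter (fun k => k < i), (1 - ξ k)) *
            pd K (pd K (f ∘ stickBreak K) i) i ξ +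
        (1 / 2) * ∑ i,
          ((θ (idx K i) - ThetaGe K θ i * ξ i) /
              ∏ k ∈ Finset.univ.filter (fun k => k < i), (1 - ξ k)) *
            pd K (f ∘ stickBreak K) i ξ :=
  neutral_generator_stick_breaking_general K θ f hf ξ hξ
end

section
/- Second-order differential identity for weighted Jacobi factors (key step in the proof of Lemma 3): Let a > 0, B > 0 be real, and n, N ∈ ℕ. Define g(x) := (1 − x)^N R_n^{(a, B+2N)}(x). Then for every x ∈ (0,1): x(1−x) g''(x) + (a − (a+B) x) g'(x) = [ −(n+N)(n+N−1+a+B) + N(N−1+B)/(1−x) ] · g(x). -/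
open MeasureTheory Filter

noncomputable section WrightFisher

/-!
Write `R = R_n^{(a,b)} = ∑ₛ cₛ (x - 1)ˢ xⁿ⁻ˢ` and `L = x(1-x)∂² + (a - (a+b)x)∂`. Since
`(x - 1) - x = -1`, the operator `L + n(n+a+b-1)` maps `(x - 1)ˢ xⁿ⁻ˢ` to
`βₛ (x - 1)ˢ xⁿ⁻ˢ⁻¹ - αₛ (x - 1)ˢ⁻¹ xⁿ⁻ˢ` with `αₛ = s(s-1+b)`, `βₛ = (n-s)(n-s-1+a)`, and the
recurrence `Γ(z+1) = z Γ(z)` gives `cₛ₊₁ αₛ₊₁ = cₛ βₛ`, so the sum telescopes to `L R = -n(n+a+b-1) R`.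
For `g = (1-x)ᴺ R` with `b = B + 2N`, the product rule turns this into the stated identity.
All derivatives are taken of polynomials, where they are algebraic.
-/

open Polynomial

noncomputable def jacobiOp (a b : ℝ) : ℝ[X] →ₗ[ℝ] ℝ[X] :=
  LinearMap.mulLeft ℝ (X * (1 - X)) ∘ₗ derivative ∘ₗ derivative +
    LinearMap.mulLeft ℝ (C a - C (a + b) * X) ∘ₗ derivative

theorem jacobiOp_apply (a b : ℝ) (p : ℝ[X]) :
    jacobiOp a b p =
      X * (1 - X) * derivative (derivative p) + (C a - C (a + b) * X) * derivative p :=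
  rfl

theorem eval_jacobiOp (a b : ℝ) (q : ℝ[X]) (x : ℝ) :
    (jacobiOp a b q).eval x =
      x * (1 - x) * deriv (deriv fun y => q.eval y) x +
        (a - (a + b) * x) * deriv (fun y => q.eval y) x := by
  have hq : deriv (fun y => q.eval y) = fun y => q.derivative.eval y := funext fun _ => q.deriv
  rw [hq, Polynomial.deriv, jacobiOp_apply]
  simp only [eval_mul, eval_add, eval_sub, eval_C, eval_X, eval_one]

theorem derivative_X_sub_one_pow_mul_X_pow (s p : ℕ) :
    derivative ((X - 1 : ℝ[X]) ^ s * X ^ p) =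
      C (s : ℝ) * ((X - 1) ^ (s - 1) * X ^ p) + C (p : ℝ) * ((X - 1) ^ s * X ^ (p - 1)) := by
  simp only [derivative_mul, derivative_pow, derivative_sub, derivative_X, derivative_one]
  ring

theorem jacobiOp_X_sub_one_pow_mul_X_pow (a b : ℝ) (s p : ℕ) :
    jacobiOp a b ((X - 1) ^ s * X ^ p) +
        C (((s + p : ℕ) : ℝ) * ((s + p : ℕ) + a + b - 1)) * ((X - 1) ^ s * X ^ p) =
      C ((p : ℝ) * (p - 1 + a)) * ((X - 1) ^ s * X ^ (p - 1)) -
        C ((s : ℝ) * (s - 1 + b)) * ((X - 1) ^ (s - 1) * X ^ p) := by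
  rw [jacobiOp_apply, derivative_X_sub_one_pow_mul_X_pow, derivative_add, derivative_C_mul,
    derivative_C_mul, derivative_X_sub_one_pow_mul_X_pow, derivative_X_sub_one_pow_mul_X_pow]
  simp only [map_mul, map_add, map_sub, map_natCast, map_one, Nat.cast_add]
  -- the exponents `s - 1`, `s - 1 - 1`, `p - 1`, `p - 1 - 1` are truncated below `2`
  rcases s with _ | _ | s <;> rcases p with _ | _ | p <;>
    simp only [Nat.add_sub_cancel, Nat.zero_sub, Nat.sub_self, pow_zero, Nat.cast_zero,
      Nat.cast_add, Nat.cast_one, zero_mul, add_zero] <;>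
    ring

noncomputable def modJacobiCoeff (a b : ℝ) (n s : ℕ) : ℝ :=
  (Real.Gamma ((n : ℝ) + b) / (Real.Gamma ((n : ℝ) - (s : ℝ) + 1) * Real.Gamma (b + (s : ℝ)))) *
    (Real.Gamma ((n : ℝ) + a) / (Real.Gamma ((s : ℝ) + 1) * Real.Gamma (a + (n : ℝ) - (s : ℝ))))

noncomputable def modJacobiPoly (a b : ℝ) (n : ℕ) : ℝ[X] :=
  ∑ s ∈ Finset.range (n + 1), modJacobiCoeff a b n s • ((X - 1) ^ s * X ^ (n - s))

theorem eval_modJacobiPoly (a b : ℝ) (n : ℕ) (x : ℝ) :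
    (modJacobiPoly a b n).eval x = modJacobi a b n x := by
  simp only [modJacobiPoly, modJacobi, modJacobiCoeff, eval_finsetSum, eval_smul, eval_mul,
    eval_pow, eval_sub, eval_X, eval_one, smul_eq_mul, mul_assoc]

theorem modJacobiCoeff_succ_mul {a b : ℝ} (ha : 0 < a) (hb : 0 < b) {n s : ℕ} (hs : s < n) :
    modJacobiCoeff a b n (s + 1) * ((s + 1) * (s + b)) =
      modJacobiCoeff a b n s * ((n - s) * (n - s - 1 + a)) := by
  have hns : (1 : ℝ) ≤ n - s := by
    rw [le_sub_iff_add_le']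
    exact_mod_cast hs
  have ha' : 0 < a + n - s - 1 := by linarith
  have hΓ₁ : Real.Gamma (n - s + 1) = (n - s) * Real.Gamma (n - s) :=
    Real.Gamma_add_one (by positivity)
  have hΓ₂ : Real.Gamma (b + s + 1) = (b + s) * Real.Gamma (b + s) :=
    Real.Gamma_add_one (by positivity)
  have hΓ₃ : Real.Gamma (s + 1 + 1) = (s + 1) * Real.Gamma (s + 1) :=
    Real.Gamma_add_one (by positivity)
  have hΓ₄ : Real.Gamma (a + n - s) = (a + n - s - 1) * Real.Gamma (a + n - s - 1) := by
    rw [← Real.Gamma_add_one ha'.ne', sub_add_cancel]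
  have h₁ := (Real.Gamma_pos_of_pos (by linarith : (0 : ℝ) < n - s)).ne'
  have h₂ := (Real.Gamma_pos_of_pos (by positivity : 0 < b + s)).ne'
  have h₃ := (Real.Gamma_pos_of_pos (by positivity : (0 : ℝ) < s + 1)).ne'
  have h₄ := (Real.Gamma_pos_of_pos ha').ne'
  simp only [modJacobiCoeff, Nat.cast_add, Nat.cast_one]
  rw [show (n : ℝ) - (s + 1) + 1 = n - s by ring, show b + (s + 1) = b + s + 1 by ring,
    show a + n - (s + 1) = a + n - s - 1 by ring, hΓ₁, hΓ₂, hΓ₃, hΓ₄]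
  field_simp
  ring

theorem jacobiOp_modJacobiPoly {a b : ℝ} (ha : 0 < a) (hb : 0 < b) (n : ℕ) :
    jacobiOp a b (modJacobiPoly a b n) =
      -(C ((n : ℝ) * (n + a + b - 1)) * modJacobiPoly a b n) := by
  rw [eq_neg_iff_add_eq_zero, modJacobiPoly, map_sum, Finset.mul_sum, ← Finset.sum_add_distrib]
  have hterm : ∀ s ∈ Finset.range (n + 1),
      jacobiOp a b (modJacobiCoeff a b n s • ((X - 1) ^ s * X ^ (n - s))) +
          C ((n : ℝ) * (n + a + b - 1)) * (modJacobiCoeff a b n s • ((X - 1) ^ s * X ^ (n - s))) =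
        C (modJacobiCoeff a b n s * (((n - s : ℕ) : ℝ) * ((n - s : ℕ) - 1 + a))) *
            ((X - 1) ^ s * X ^ (n - s - 1)) -
          C (modJacobiCoeff a b n s * ((s : ℝ) * (s - 1 + b))) *
            ((X - 1) ^ (s - 1) * X ^ (n - s)) := by
    intro s hs
    have h := jacobiOp_X_sub_one_pow_mul_X_pow a b s (n - s)
    rw [Nat.add_sub_cancel' (Finset.mem_range_succ_iff.mp hs)] at h
    rw [map_smul, smul_eq_C_mul, smul_eq_C_mul, mul_left_comm, ← mul_add, h]
    simp only [map_mul]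
    ring
  rw [Finset.sum_congr rfl hterm, Finset.sum_sub_distrib, sub_eq_zero, Finset.sum_range_succ,
    Finset.sum_range_succ']
  simp only [Nat.sub_self, Nat.cast_zero, zero_mul, mul_zero, map_zero, add_zero]
  refine Finset.sum_congr rfl fun s hs => ?_
  have hsn := Finset.mem_range.mp hs
  rw [Nat.add_sub_cancel, Nat.sub_sub]
  congr 2
  rw [Nat.cast_sub hsn.le]
  push_cast
  linear_combination -modJacobiCoeff_succ_mul ha hb hsn

theorem one_sub_X_mul_jacobiOp_one_sub_X_pow_mul {a B μ : ℝ} {N : ℕ} {R : ℝ[X]}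
    (hR : jacobiOp a (B + 2 * N) R = -(C μ * R)) :
    (1 - X) * jacobiOp a B ((1 - X) ^ N * R) =
      (C ((N : ℝ) * (N - 1 + B)) - C (μ + N * (N - 1 + a + B)) * (1 - X)) *
        ((1 - X) ^ N * R) := by
  rw [jacobiOp_apply] at hR ⊢
  simp only [map_add, map_mul, map_natCast, map_ofNat] at hR
  rcases N with _ | _ | M <;>
    simp only [derivative_mul, derivative_pow, derivative_sub, derivative_neg,
      derivative_one, derivative_X, derivative_natCast, map_add, map_mul, map_natCast, map_one,
      map_zero, Nat.cast_add, Nat.cast_one, CharP.cast_eq_zero, add_tsub_cancel_right, pow_zero,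
      pow_one, zero_add, add_zero, zero_sub, sub_self, zero_mul, one_mul, mul_one, neg_mul,
      mul_neg] <;>
    push_cast at hR ⊢
  · linear_combination (1 - X) * hR
  · linear_combination (1 - X) ^ 2 * hR
  · linear_combination (1 - X) ^ (M + 3) * hR

/-- key step in the proof of Lemma 3: for `g(x) = (1-x)^N R_n^{(a,B+2N)}(x)`
and `x ∈ (0,1)`:
`x(1-x) g''(x) + (a - (a+B)x) g'(x)
  = [-(n+N)(n+N-1+a+B) + N(N-1+B)/(1-x)] g(x)`. -/
theorem weighted_jacobi_ode (a B : ℝ) (ha : 0 < a) (hB : 0 < B) (n N : ℕ)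
    (x : ℝ) (hx : x ∈ Set.Ioo (0 : ℝ) 1) :
    x * (1 - x) *
        deriv (deriv fun y => (1 - y) ^ N * modJacobi a (B + 2 * (N : ℝ)) n y) x +
      (a - (a + B) * x) *
        deriv (fun y => (1 - y) ^ N * modJacobi a (B + 2 * (N : ℝ)) n y) x =
      (-(((n : ℝ) + N) * ((n : ℝ) + N - 1 + a + B)) + (N : ℝ) * ((N : ℝ) - 1 + B) / (1 - x)) *
        ((1 - x) ^ N * modJacobi a (B + 2 * (N : ℝ)) n x) := by
  have key := congrArg (eval x) <| one_sub_X_mul_jacobiOp_one_sub_X_pow_mul <|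
    jacobiOp_modJacobiPoly ha (by positivity : 0 < B + 2 * (N : ℝ)) n
  simp only [eval_jacobiOp, eval_mul, eval_sub, eval_pow, eval_C, eval_X, eval_one,
    eval_modJacobiPoly] at key
  have h1x : 1 - x ≠ 0 := sub_ne_zero.mpr hx.2.ne'
  apply mul_left_cancel₀ h1x
  rw [key]
  field_simp
  ring
end WrightFisher
end
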